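/- arXiv:2205.04111 — 14 statements merged into one kernel-verified Lean document; each statement's English description precedes it below -/
import Mathlib

section
/- In a quantale with a pair of antitone maps ⊥(-) (left negation) and (-)⊥ (right negation) that are inverse to each other and satisfy the contraposition law x \ ⊥y = x⊥ / y for all x, y, if the quantale is unital with unit 1, then ⊥1 = 1⊥, and setting 0 := ⊥1 = 1⊥ we have ⊥x = 0 / x and x⊥ = x \ 0 for all x; moreover 0 is a dualizing element, i.e., 0 / (x \ 0) = (0 / x) \ 0 = x for all x. -/
/-! Dividing by the unit does nothing, so the contraposition law with `y = 1` (resp. `x = 1`)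
expresses `x⊥` (resp. `⊥x`) as a residual into `⊥1` (resp. `1⊥`); for `x = y = 1` it gives
`⊥1 = 1⊥`. Dualizing is then `⊥(x⊥) = x = (⊥x)⊥` rewritten through these formulas. -/

section Residuated

variable {Q : Type*} [PartialOrder Q] {mul : Q → Q → Q} {e : Q}

theorem ldiv_eq_self_of_left_unit {ldiv : Q → Q → Q}
    (hldiv : ∀ x y z, mul x y ≤ z ↔ y ≤ ldiv x z)
    (hel : ∀ x, mul e x = x) (z : Q) : ldiv e z = z :=
  eq_of_forall_le_iff fun y => by rw [← hldiv, hel]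

theorem rdiv_eq_self_of_right_unit {rdiv : Q → Q → Q}
    (hrdiv : ∀ x y z, mul x y ≤ z ↔ x ≤ rdiv z y)
    (her : ∀ x, mul x e = x) (z : Q) : rdiv z e = z :=
  eq_of_forall_le_iff fun y => by rw [← hrdiv, her]

end Residuated

theorem stmt0_general {Q : Type*} [CompleteLattice Q]
    (mul : Q → Q → Q)
    (ldiv rdiv : Q → Q → Q)
    (hldiv : ∀ x y z : Q, mul x y ≤ z ↔ y ≤ ldiv x z)
    (hrdiv : ∀ x y z : Q, mul x y ≤ z ↔ x ≤ rdiv z y)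
    (lneg rneg : Q → Q)
    (hinv1 : ∀ x, lneg (rneg x) = x) (hinv2 : ∀ x, rneg (lneg x) = x)
    (hserre : ∀ x y, ldiv x (lneg y) = rdiv (rneg x) y)
    (e : Q) (hel : ∀ x, mul e x = x) (her : ∀ x, mul x e = x) :
    lneg e = rneg e ∧
    (∀ x, lneg x = rdiv (lneg e) x) ∧
    (∀ x, rneg x = ldiv x (lneg e)) ∧
    (∀ x, rdiv (lneg e) (ldiv x (lneg e)) = x) ∧
    (∀ x, ldiv (rdiv (lneg e) x) (lneg e) = x) := by
  have hle := ldiv_eq_self_of_left_unit hldiv hel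
  have hre := rdiv_eq_self_of_right_unit hrdiv her
  have rneg_eq : ∀ x, rneg x = ldiv x (lneg e) := fun x => by rw [hserre x e, hre]
  have lneg_eq : ∀ x, lneg x = rdiv (rneg e) x := fun x => by rw [← hserre e x, hle]
  have lneg_unit : lneg e = rneg e := by rw [lneg_eq e, hre]
  have lneg_eq' : ∀ x, lneg x = rdiv (lneg e) x := fun x => by rw [lneg_unit, lneg_eq x]
  refine ⟨lneg_unit, lneg_eq', rneg_eq, fun x => ?_, fun x => ?_⟩
  · rw [← rneg_eq x, ← lneg_eq' (rneg x), hinv1]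
  · rw [← lneg_eq' x, ← rneg_eq (lneg x), hinv2]

theorem stmt0 {Q : Type*} [CompleteLattice Q]
    (mul : Q → Q → Q)
    (hassoc : ∀ x y z, mul (mul x y) z = mul x (mul y z))
    (ldiv rdiv : Q → Q → Q)
    (hldiv : ∀ x y z : Q, mul x y ≤ z ↔ y ≤ ldiv x z)
    (hrdiv : ∀ x y z : Q, mul x y ≤ z ↔ x ≤ rdiv z y)
    (lneg rneg : Q → Q)
    (hlanti : Antitone lneg) (hranti : Antitone rneg)
    (hinv1 : ∀ x, lneg (rneg x) = x) (hinv2 : ∀ x, rneg (lneg x) = x)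
    (hserre : ∀ x y, ldiv x (lneg y) = rdiv (rneg x) y)
    (e : Q) (hel : ∀ x, mul e x = x) (her : ∀ x, mul x e = x) :
    lneg e = rneg e ∧
    (∀ x, lneg x = rdiv (lneg e) x) ∧
    (∀ x, rneg x = ldiv x (lneg e)) ∧
    (∀ x, rdiv (lneg e) (ldiv x (lneg e)) = x) ∧
    (∀ x, ldiv (rdiv (lneg e) x) (lneg e) = x) :=
  stmt0_general mul ldiv rdiv hldiv hrdiv lneg rneg hinv1 hinv2 hserre e hel her
end

section
/- Let Q be a quantale with a Serre duality ⊥(-), (-)⊥ (antitone maps inverse to each other satisfying x \ ⊥y = x⊥ / y). Then the two dual multiplications x ⊕ y := ⊥(y⊥ ∗ x⊥) and x ⊕' y := (⊥y ∗ ⊥x)⊥ coincide, and both equal ⊥x \ y and x / y⊥. -/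
/-! Each of the four elements is the largest `z` with `z ∗ y⊥ ≤ x`. Two facts reduce every
comparison to this one: the Serre identity gives the cyclic rule `a ∗ b ≤ ⊥c ↔ b ∗ c ≤ a⊥`, and
since `⊥(-)` and `(-)⊥` are mutually inverse antitone maps, `z ≤ ⊥w ↔ w ≤ z⊥`. -/

section SerreDuality

variable {Q : Type*} [PartialOrder Q]

theorem le_lneg_iff_le_rneg {lneg rneg : Q → Q} (hlanti : Antitone lneg) (hranti : Antitone rneg)
    (hinv1 : ∀ x, lneg (rneg x) = x) (hinv2 : ∀ x, rneg (lneg x) = x) {a b : Q} :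
    a ≤ lneg b ↔ b ≤ rneg a :=
  ⟨fun h => by simpa only [hinv2] using hranti h, fun h => by simpa only [hinv1] using hlanti h⟩

theorem mul_le_lneg_iff_mul_le_rneg {mul ldiv rdiv : Q → Q → Q} {lneg rneg : Q → Q}
    (hldiv : ∀ x y z : Q, mul x y ≤ z ↔ y ≤ ldiv x z)
    (hrdiv : ∀ x y z : Q, mul x y ≤ z ↔ x ≤ rdiv z y)
    (hserre : ∀ x y, ldiv x (lneg y) = rdiv (rneg x) y) (a b c : Q) :
    mul a b ≤ lneg c ↔ mul b c ≤ rneg a := by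
  rw [hldiv, hserre, ← hrdiv]

end SerreDuality

theorem stmt2_general {Q : Type*} [CompleteLattice Q]
    (mul : Q → Q → Q)
    (ldiv rdiv : Q → Q → Q)
    (hldiv : ∀ x y z : Q, mul x y ≤ z ↔ y ≤ ldiv x z)
    (hrdiv : ∀ x y z : Q, mul x y ≤ z ↔ x ≤ rdiv z y)
    (lneg rneg : Q → Q)
    (hlanti : Antitone lneg) (hranti : Antitone rneg)
    (hinv1 : ∀ x, lneg (rneg x) = x) (hinv2 : ∀ x, rneg (lneg x) = x)
    (hserre : ∀ x y, ldiv x (lneg y) = rdiv (rneg x) y) :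
    ∀ x y, lneg (mul (rneg y) (rneg x)) = rneg (mul (lneg y) (lneg x)) ∧
      lneg (mul (rneg y) (rneg x)) = ldiv (lneg x) y ∧
      lneg (mul (rneg y) (rneg x)) = rdiv x (rneg y) := by
  intro x y
  have hcyc := mul_le_lneg_iff_mul_le_rneg hldiv hrdiv hserre
  have hswap (z : Q) : mul (lneg x) z ≤ y ↔ mul z (rneg y) ≤ x := by
    simpa only [hinv1, hinv2] using hcyc (lneg x) z (rneg y)
  have hsum (z : Q) : z ≤ lneg (mul (rneg y) (rneg x)) ↔ mul z (rneg y) ≤ x := by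
    rw [le_lneg_iff_le_rneg hlanti hranti hinv1 hinv2, ← hcyc, hinv1]
  have hsum' (z : Q) : z ≤ rneg (mul (lneg y) (lneg x)) ↔ mul z (rneg y) ≤ x := by
    rw [le_lneg_iff_le_rneg hranti hlanti hinv2 hinv1, hcyc, hinv2, hswap]
  have hldiv' (z : Q) : z ≤ ldiv (lneg x) y ↔ mul z (rneg y) ≤ x :=
    (hldiv _ _ _).symm.trans (hswap z)
  have hrdiv' (z : Q) : z ≤ rdiv x (rneg y) ↔ mul z (rneg y) ≤ x := (hrdiv _ _ _).symm
  exact ⟨eq_of_forall_le_iff fun z => (hsum z).trans (hsum' z).symm,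
    eq_of_forall_le_iff fun z => (hsum z).trans (hldiv' z).symm,
    eq_of_forall_le_iff fun z => (hsum z).trans (hrdiv' z).symm⟩

theorem stmt2 {Q : Type*} [CompleteLattice Q]
    (mul : Q → Q → Q)
    (hassoc : ∀ x y z, mul (mul x y) z = mul x (mul y z))
    (ldiv rdiv : Q → Q → Q)
    (hldiv : ∀ x y z : Q, mul x y ≤ z ↔ y ≤ ldiv x z)
    (hrdiv : ∀ x y z : Q, mul x y ≤ z ↔ x ≤ rdiv z y)
    (lneg rneg : Q → Q)
    (hlanti : Antitone lneg) (hranti : Antitone rneg)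
    (hinv1 : ∀ x, lneg (rneg x) = x) (hinv2 : ∀ x, rneg (lneg x) = x)
    (hserre : ∀ x y, ldiv x (lneg y) = rdiv (rneg x) y) :
    ∀ x y, lneg (mul (rneg y) (rneg x)) = rneg (mul (lneg y) (lneg x)) ∧
      lneg (mul (rneg y) (rneg x)) = ldiv (lneg x) y ∧
      lneg (mul (rneg y) (rneg x)) = rdiv x (rneg y) :=
  stmt2_general mul ldiv rdiv hldiv hrdiv lneg rneg hlanti hranti hinv1 hinv2 hserre
end

section
/- For any quantale Q, the Chu construction C(Q) = Q × Q^op with multiplication (x₁,x₂) ⋆ (y₁,y₂) := (x₁ ∗ y₁, (y₁ \ x₂) ∧ (y₂ / x₁)) is a quantale, and the map ⊥(x₁,x₂) := (x₂,x₁) is an antitone involution satisfying the Serre contraposition condition, making C(Q) a (possibly unitless) Girard quantale. -/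
/-!
By residuation, `p ⋆ q ≤ c` in `C(Q)` amounts to the three inequalities
`p₁ q₁ ≤ c₁`, `q₁ c₂ ≤ p₂` and `c₂ p₁ ≤ q₂` in `Q`, which are cyclic in `(p, q, ⊥c)`.
Every claim is then checked on upper bounds: associativity because both bracketings
of `a ⋆ b ⋆ c ≤ w` unfold to the same inequalities in `Q`, sup-distributivity because
multiplication on either side is a left adjoint, and Serre contraposition because
`a ⋆ c ≤ ⊥b` and `c ⋆ b ≤ ⊥a` are the same three conditions, cyclically permuted.
-/

open OrderDual in
/-- The Chu multiplication on `Q × Qᵒᵈ`. -/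
def chuStar {Q : Type*} [CompleteLattice Q] (mul ldiv rdiv : Q → Q → Q)
    (p q : Q × Qᵒᵈ) : Q × Qᵒᵈ :=
  (mul p.1 q.1, toDual (ldiv q.1 (ofDual p.2) ⊓ rdiv (ofDual q.2) p.1))

/-- The Chu duality on `Q × Qᵒᵈ`. -/
def chuNeg {Q : Type*} [CompleteLattice Q] (p : Q × Qᵒᵈ) : Q × Qᵒᵈ :=
  (OrderDual.ofDual p.2, OrderDual.toDual p.1)

open OrderDual

section Residuated

variable {Q : Type*} [CompleteLattice Q] {mul ldiv rdiv : Q → Q → Q}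

theorem sSup_mul_le_iff (hrdiv : ∀ x y z : Q, mul x y ≤ z ↔ x ≤ rdiv z y)
    (T : Set Q) (b z : Q) : mul (sSup T) b ≤ z ↔ ∀ t ∈ T, mul t b ≤ z := by
  rw [hrdiv, sSup_le_iff]
  exact forall₂_congr fun t _ => (hrdiv t b z).symm

theorem mul_sSup_le_iff (hldiv : ∀ x y z : Q, mul x y ≤ z ↔ y ≤ ldiv x z)
    (a : Q) (T : Set Q) (z : Q) : mul a (sSup T) ≤ z ↔ ∀ t ∈ T, mul a t ≤ z := by
  rw [hldiv, sSup_le_iff]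
  exact forall₂_congr fun t _ => (hldiv a t z).symm

theorem le_ofDual_sSup_iff (T : Set Qᵒᵈ) (x : Q) :
    x ≤ ofDual (sSup T) ↔ ∀ t ∈ T, x ≤ ofDual t :=
  sSup_le_iff (α := Qᵒᵈ) (a := toDual x)

variable (hldiv : ∀ x y z : Q, mul x y ≤ z ↔ y ≤ ldiv x z)
  (hrdiv : ∀ x y z : Q, mul x y ≤ z ↔ x ≤ rdiv z y)
include hldiv hrdiv

theorem chuStar_le_iff (p q c : Q × Qᵒᵈ) :
    chuStar mul ldiv rdiv p q ≤ c ↔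
      mul p.1 q.1 ≤ c.1 ∧ mul q.1 (ofDual c.2) ≤ ofDual p.2 ∧
        mul (ofDual c.2) p.1 ≤ ofDual q.2 := by
  simp only [chuStar, Prod.le_def, toDual_le, le_inf_iff, ← hldiv, ← hrdiv]

theorem chuStar_assoc (hassoc : ∀ x y z, mul (mul x y) z = mul x (mul y z))
    (a b c : Q × Qᵒᵈ) :
    chuStar mul ldiv rdiv (chuStar mul ldiv rdiv a b) c =
      chuStar mul ldiv rdiv a (chuStar mul ldiv rdiv b c) := by
  refine eq_of_forall_ge_iff fun w => ?_
  rw [chuStar_le_iff hldiv hrdiv, chuStar_le_iff hldiv hrdiv]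
  simp only [chuStar, ofDual_toDual, le_inf_iff, ← hldiv, ← hrdiv, hassoc]
  tauto

theorem chuStar_sSup_left (s : Set (Q × Qᵒᵈ)) (b : Q × Qᵒᵈ) :
    chuStar mul ldiv rdiv (sSup s) b = sSup ((fun a => chuStar mul ldiv rdiv a b) '' s) := by
  refine eq_of_forall_ge_iff fun w => ?_
  simp only [sSup_le_iff, Set.forall_mem_image, chuStar_le_iff hldiv hrdiv, Prod.fst_sSup,
    Prod.snd_sSup, sSup_mul_le_iff hrdiv, mul_sSup_le_iff hldiv, le_ofDual_sSup_iff, Set.forall_mem_image, forall_and]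

theorem chuStar_sSup_right (a : Q × Qᵒᵈ) (s : Set (Q × Qᵒᵈ)) :
    chuStar mul ldiv rdiv a (sSup s) = sSup ((fun b => chuStar mul ldiv rdiv a b) '' s) := by
  refine eq_of_forall_ge_iff fun w => ?_
  simp only [sSup_le_iff, Set.forall_mem_image, chuStar_le_iff hldiv hrdiv, Prod.fst_sSup,
    Prod.snd_sSup, sSup_mul_le_iff hrdiv, mul_sSup_le_iff hldiv, le_ofDual_sSup_iff, Set.forall_mem_image, forall_and]

theorem chuStar_le_chuNeg_iff (a b c : Q × Qᵒᵈ) :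
    chuStar mul ldiv rdiv a c ≤ chuNeg b ↔ chuStar mul ldiv rdiv c b ≤ chuNeg a := by
  simp only [chuStar_le_iff hldiv hrdiv, chuNeg, ofDual_toDual]
  tauto

end Residuated

theorem chuNeg_antitone {Q : Type*} [CompleteLattice Q] : Antitone (chuNeg (Q := Q)) :=
  fun _ _ h => ⟨h.2, h.1⟩

@[simp]
theorem chuNeg_chuNeg {Q : Type*} [CompleteLattice Q] (p : Q × Qᵒᵈ) : chuNeg (chuNeg p) = p :=
  rfl

theorem stmt3 {Q : Type*} [CompleteLattice Q]
    (mul : Q → Q → Q)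
    (hassoc : ∀ x y z, mul (mul x y) z = mul x (mul y z))
    (ldiv rdiv : Q → Q → Q)
    (hldiv : ∀ x y z : Q, mul x y ≤ z ↔ y ≤ ldiv x z)
    (hrdiv : ∀ x y z : Q, mul x y ≤ z ↔ x ≤ rdiv z y) :
    -- C(Q) is a quantale:
    (∀ a b c : Q × Qᵒᵈ,
        chuStar mul ldiv rdiv (chuStar mul ldiv rdiv a b) c =
          chuStar mul ldiv rdiv a (chuStar mul ldiv rdiv b c)) ∧
    (∀ (s : Set (Q × Qᵒᵈ)) (b : Q × Qᵒᵈ),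
        chuStar mul ldiv rdiv (sSup s) b =
          sSup ((fun a => chuStar mul ldiv rdiv a b) '' s)) ∧
    (∀ (a : Q × Qᵒᵈ) (s : Set (Q × Qᵒᵈ)),
        chuStar mul ldiv rdiv a (sSup s) =
          sSup ((fun b => chuStar mul ldiv rdiv a b) '' s)) ∧
    -- ⊥(-) is an antitone involution:
    Antitone (chuNeg (Q := Q)) ∧
    (∀ p : Q × Qᵒᵈ, chuNeg (chuNeg p) = p) ∧
    -- the Serre contraposition condition, with residuals of ⋆ given by suprema:
    (∀ a b : Q × Qᵒᵈ,
        sSup {c | chuStar mul ldiv rdiv a c ≤ chuNeg b} =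
          sSup {c | chuStar mul ldiv rdiv c b ≤ chuNeg a}) :=
  ⟨chuStar_assoc hldiv hrdiv hassoc, chuStar_sSup_left hldiv hrdiv,
    chuStar_sSup_right hldiv hrdiv, chuNeg_antitone, chuNeg_chuNeg, fun a b => by
      simp_rw [chuStar_le_chuNeg_iff hldiv hrdiv a b]⟩
end

section
/- For any quantale Q, the Chu construction C(Q) = Q × Q^op with multiplication (x₁,x₂) ⋆ (y₁,y₂) := (x₁ ∗ y₁, (y₁ \ x₂) ∧ (y₂ / x₁)) is unital if and only if Q is unital. -/
/-!
Residuation makes `ldiv x` and `rdiv · y` right adjoints of `mul x` and `mul · y`. Hence a unit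
`e` of `Q` satisfies `ldiv e a = a = rdiv a e`, while `a ≤ ldiv x ⊤` and `a ≤ rdiv ⊤ x` always
hold, so `(e, ⊤)` is a unit of the Chu construction. Conversely, the first coordinate of the Chu
product is the product in `Q`, so the first coordinate of a Chu unit is a unit of `Q`.
-/

open OrderDual in
/-- The Chu multiplication on `Q × Qᵒᵈ`. -/
def chuStar4 {Q : Type*} [CompleteLattice Q] (mul ldiv rdiv : Q → Q → Q)
    (p q : Q × Qᵒᵈ) : Q × Qᵒᵈ :=
  (mul p.1 q.1, toDual (ldiv q.1 (ofDual p.2) ⊓ rdiv (ofDual q.2) p.1))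

open OrderDual

section Residuation

variable {Q : Type*} [CompleteLattice Q] {mul ldiv rdiv : Q → Q → Q}

theorem ldiv_eq_self_of_mul_left_eq_self (hldiv : ∀ x y z : Q, mul x y ≤ z ↔ y ≤ ldiv x z)
    {e : Q} (he : ∀ x, mul e x = x) (a : Q) : ldiv e a = a :=
  GaloisConnection.u_unique (fun y z => hldiv e y z) GaloisConnection.id he

theorem rdiv_eq_self_of_mul_right_eq_self (hrdiv : ∀ x y z : Q, mul x y ≤ z ↔ x ≤ rdiv z y)
    {e : Q} (he : ∀ x, mul x e = x) (a : Q) : rdiv a e = a :=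
  GaloisConnection.u_unique (fun y z => hrdiv y e z) GaloisConnection.id he

theorem le_ldiv_top (hldiv : ∀ x y z : Q, mul x y ≤ z ↔ y ≤ ldiv x z) (x a : Q) :
    a ≤ ldiv x ⊤ :=
  (hldiv x a ⊤).1 le_top

theorem le_rdiv_top (hrdiv : ∀ x y z : Q, mul x y ≤ z ↔ x ≤ rdiv z y) (x a : Q) :
    a ≤ rdiv ⊤ x :=
  (hrdiv a x ⊤).1 le_top

theorem chuStar4_unit_left (hldiv : ∀ x y z : Q, mul x y ≤ z ↔ y ≤ ldiv x z)
    (hrdiv : ∀ x y z : Q, mul x y ≤ z ↔ x ≤ rdiv z y) {e : Q}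
    (he : ∀ x, mul e x = x ∧ mul x e = x) (p : Q × Qᵒᵈ) :
    chuStar4 mul ldiv rdiv (e, toDual ⊤) p = p := by
  obtain ⟨x, a⟩ := p
  have hx : ldiv x ⊤ ⊓ rdiv (ofDual a) e = ofDual a := by
    rw [rdiv_eq_self_of_mul_right_eq_self hrdiv (fun y => (he y).2)]
    exact inf_eq_right.2 (le_ldiv_top hldiv x _)
  simp only [chuStar4, (he x).1, ofDual_toDual, hx, toDual_ofDual]

theorem chuStar4_unit_right (hldiv : ∀ x y z : Q, mul x y ≤ z ↔ y ≤ ldiv x z)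
    (hrdiv : ∀ x y z : Q, mul x y ≤ z ↔ x ≤ rdiv z y) {e : Q}
    (he : ∀ x, mul e x = x ∧ mul x e = x) (p : Q × Qᵒᵈ) :
    chuStar4 mul ldiv rdiv p (e, toDual ⊤) = p := by
  obtain ⟨x, a⟩ := p
  have hx : ldiv e (ofDual a) ⊓ rdiv ⊤ x = ofDual a := by
    rw [ldiv_eq_self_of_mul_left_eq_self hldiv (fun y => (he y).1)]
    exact inf_eq_left.2 (le_rdiv_top hrdiv x _)
  simp only [chuStar4, (he x).2, ofDual_toDual, hx, toDual_ofDual]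

end Residuation

theorem stmt4_general {Q : Type*} [CompleteLattice Q]
    (mul : Q → Q → Q)
    (ldiv rdiv : Q → Q → Q)
    (hldiv : ∀ x y z : Q, mul x y ≤ z ↔ y ≤ ldiv x z)
    (hrdiv : ∀ x y z : Q, mul x y ≤ z ↔ x ≤ rdiv z y) :
    (∃ u : Q × Qᵒᵈ, ∀ p, chuStar4 mul ldiv rdiv u p = p ∧
        chuStar4 mul ldiv rdiv p u = p) ↔
      (∃ e : Q, ∀ x, mul e x = x ∧ mul x e = x) := by
  constructor
  · rintro ⟨u, hu⟩
    refine ⟨u.1, fun x => ?_⟩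
    obtain ⟨hleft, hright⟩ := hu (x, toDual ⊥)
    exact ⟨congrArg Prod.fst hleft, congrArg Prod.fst hright⟩
  · rintro ⟨e, he⟩
    exact ⟨(e, toDual ⊤), fun p =>
      ⟨chuStar4_unit_left hldiv hrdiv he p, chuStar4_unit_right hldiv hrdiv he p⟩⟩

theorem stmt4 {Q : Type*} [CompleteLattice Q]
    (mul : Q → Q → Q)
    (hassoc : ∀ x y z, mul (mul x y) z = mul x (mul y z))
    (ldiv rdiv : Q → Q → Q)
    (hldiv : ∀ x y z : Q, mul x y ≤ z ↔ y ≤ ldiv x z)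
    (hrdiv : ∀ x y z : Q, mul x y ≤ z ↔ x ≤ rdiv z y) :
    (∃ u : Q × Qᵒᵈ, ∀ p, chuStar4 mul ldiv rdiv u p = p ∧
        chuStar4 mul ldiv rdiv p u = p) ↔
      (∃ e : Q, ∀ x, mul e x = x ∧ mul x e = x) :=
  stmt4_general mul ldiv rdiv hldiv hrdiv
end

section
/- Let (l, r) be a Serre Galois connection on a quantale (Q, ∗), i.e., a Galois connection (y ≤ l(x) ⟺ x ≤ r(y)) with l ∘ r = r ∘ l and satisfying x ∗ y ≤ r(z) ⟺ z ∗ x ≤ l(y) for all x, y, z. Then j := l ∘ r is a quantic nucleus on Q, i.e., a closure operator satisfying j(x) ∗ j(y) ≤ j(x ∗ y). -/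
/-!
Write `j = l ∘ r = r ∘ l`. As `l` and `r` form an antitone Galois connection, `j` is a closure
operator and `l ∘ j = l`. Two applications of the Serre condition move the right factor of
`x ∗ y ≤ j z = r (l z)` into the argument of `l` and back, so `x ∗ y ≤ j z ↔ x ∗ j y ≤ j z`.
The Serre condition is invariant under reversing the multiplication and exchanging `l` with `r`,
which gives the same statement for the left factor; with `z = x ∗ y` both together yield
`j x ∗ j y ≤ j (x ∗ y)`.
-/

open OrderDual

structure IsSerreConnection {Q : Type*} [PartialOrder Q] (mul : Q → Q → Q) (l r : Q → Q) :
    Prop where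
  gc : ∀ x y, y ≤ l x ↔ x ≤ r y
  comm : l ∘ r = r ∘ l
  shift : ∀ x y z, mul x y ≤ r z ↔ mul z x ≤ l y

theorem galoisConnection_toDual_comp {Q : Type*} [Preorder Q] {l r : Q → Q}
    (hgc : ∀ x y, y ≤ l x ↔ x ≤ r y) : GaloisConnection (toDual ∘ r) (l ∘ ofDual) :=
  fun x y => (hgc (ofDual y) x).symm

namespace IsSerreConnection

variable {Q : Type*} [PartialOrder Q] {mul : Q → Q → Q} {l r : Q → Q}

theorem symm (h : IsSerreConnection mul l r) : IsSerreConnection (flip mul) r l where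
  gc x y := (h.gc y x).symm
  comm := h.comm.symm
  shift x y z := (h.shift x z y).symm

theorem l_l_r_eq_l (h : IsSerreConnection mul l r) (x : Q) : l (l (r x)) = l x := by
  rw [← Function.comp_apply (f := l) (g := r), h.comm]
  exact (galoisConnection_toDual_comp h.gc).u_l_u_eq_u (toDual x)

theorem mul_le_closure_iff_mul_closure_le (h : IsSerreConnection mul l r) (x y z : Q) :
    mul x y ≤ l (r z) ↔ mul x (l (r y)) ≤ l (r z) := by
  rw [← Function.comp_apply (f := l) (g := r), h.comm, Function.comp_apply,
    h.shift, h.shift, h.l_l_r_eq_l]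

theorem mul_le_closure_iff_closure_mul_le (h : IsSerreConnection mul l r) (x y z : Q) :
    mul x y ≤ l (r z) ↔ mul (l (r x)) y ≤ l (r z) := by
  have key := h.symm.mul_le_closure_iff_mul_closure_le y x z
  simp only [flip, ← Function.comp_apply (f := r) (g := l), ← h.comm] at key
  exact key

theorem closure_mul_closure_le (h : IsSerreConnection mul l r) (x y : Q) :
    mul (l (r x)) (l (r y)) ≤ l (r (mul x y)) := by
  have hxy : mul x y ≤ l (r (mul x y)) := (h.gc (r (mul x y)) (mul x y)).mpr le_rfl
  exact (h.mul_le_closure_iff_closure_mul_le _ _ _).mp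
    ((h.mul_le_closure_iff_mul_closure_le _ _ _).mp hxy)

end IsSerreConnection

theorem stmt5_general {Q : Type*} [CompleteLattice Q]
    (mul : Q → Q → Q)
    (l r : Q → Q)
    (hgc : ∀ x y, y ≤ l x ↔ x ≤ r y)
    (hcomm : l ∘ r = r ∘ l)
    (hshift : ∀ x y z, mul x y ≤ r z ↔ mul z x ≤ l y) :
    Monotone (l ∘ r) ∧
    (∀ x, x ≤ (l ∘ r) x) ∧
    (∀ x, (l ∘ r) ((l ∘ r) x) = (l ∘ r) x) ∧
    (∀ x y, mul ((l ∘ r) x) ((l ∘ r) y) ≤ (l ∘ r) (mul x y)) := by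
  let j := (galoisConnection_toDual_comp hgc).closureOperator
  exact ⟨j.monotone, j.le_closure, j.idempotent,
    (IsSerreConnection.mk hgc hcomm hshift).closure_mul_closure_le⟩

theorem stmt5 {Q : Type*} [CompleteLattice Q]
    (mul : Q → Q → Q)
    (hassoc : ∀ x y z, mul (mul x y) z = mul x (mul y z))
    (ldiv rdiv : Q → Q → Q)
    (hldiv : ∀ x y z : Q, mul x y ≤ z ↔ y ≤ ldiv x z)
    (hrdiv : ∀ x y z : Q, mul x y ≤ z ↔ x ≤ rdiv z y)
    (l r : Q → Q)
    (hgc : ∀ x y, y ≤ l x ↔ x ≤ r y)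
    (hcomm : l ∘ r = r ∘ l)
    (hshift : ∀ x y z, mul x y ≤ r z ↔ mul z x ≤ l y) :
    Monotone (l ∘ r) ∧
    (∀ x, x ≤ (l ∘ r) x) ∧
    (∀ x, (l ∘ r) ((l ∘ r) x) = (l ∘ r) x) ∧
    (∀ x y, mul ((l ∘ r) x) ((l ∘ r) y) ≤ (l ∘ r) (mul x y)) :=
  stmt5_general mul l r hgc hcomm hshift
end

section
/- Let (l, r) be a Serre Galois connection on a quantale (Q, ∗) and let j := l ∘ r = r ∘ l be the induced nucleus with Q_j its set of fixed points and x ∗_j y := j(x ∗ y). Then l and r restrict to maps Q_j → Q_j that are inverse to each other and satisfy the Serre shift relation for ∗_j, so (Q_j, ∗_j, l, r) is a (possibly unitless) Frobenius quantale. -/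
/-! For the antitone Galois connection `(l, r)`, `j = l ∘ r` is a closure operator whose closed
elements include every `l y` and, since `l ∘ r = r ∘ l`, every `r z`. Hence `j (x ∗ y) ≤ r z` iff
`x ∗ y ≤ r z`, and likewise for `l y`, so the shift relation of `(l, r)` passes to `∗_j` verbatim. -/

open OrderDual

section AntitoneGaloisConnection

variable {α β : Type*} [PartialOrder α] [PartialOrder β] {l : α → β} {r : β → α}

theorem galoisConnection_toDual_comp_of_le_iff (hgc : ∀ x y, y ≤ l x ↔ x ≤ r y) :
    GaloisConnection (toDual ∘ r) (l ∘ ofDual) :=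
  fun y x => (hgc x y).symm

theorem l_r_l_eq_l_of_le_iff (hgc : ∀ x y, y ≤ l x ↔ x ≤ r y) (x : α) : l (r (l x)) = l x :=
  (galoisConnection_toDual_comp_of_le_iff hgc).u_l_u_eq_u x

theorem r_l_r_eq_r_of_le_iff (hgc : ∀ x y, y ≤ l x ↔ x ≤ r y) (y : β) : r (l (r y)) = r y :=
  (galoisConnection_toDual_comp_of_le_iff hgc).l_u_l_eq_l y

theorem l_r_le_iff_le_of_l_r_eq (hgc : ∀ x y, y ≤ l x ↔ x ≤ r y) {a b : β} (hb : l (r b) = b) :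
    l (r a) ≤ b ↔ a ≤ b :=
  (galoisConnection_toDual_comp_of_le_iff hgc).lowerAdjoint.closure_le_closed_iff_le a hb

end AntitoneGaloisConnection

theorem stmt6_general {Q : Type*} [CompleteLattice Q]
    (mul : Q → Q → Q)
    (l r : Q → Q)
    (hgc : ∀ x y, y ≤ l x ↔ x ≤ r y)
    (hcomm : l ∘ r = r ∘ l)
    (hshift : ∀ x y z, mul x y ≤ r z ↔ mul z x ≤ l y)
    (j : Q → Q) (hj : j = l ∘ r) :
    -- l and r restrict to the j-closed elements:
    (∀ x, j x = x → j (l x) = l x) ∧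
    (∀ x, j x = x → j (r x) = r x) ∧
    -- the restrictions are inverse to each other:
    (∀ x, j x = x → l (r x) = x ∧ r (l x) = x) ∧
    -- and they satisfy the Serre shift relation for ∗_j:
    (∀ x y z, j x = x → j y = y → j z = z →
        (j (mul x y) ≤ r z ↔ j (mul z x) ≤ l y)) := by
  subst hj
  have r_l_eq : ∀ x, r (l x) = l (r x) := fun x => (congrFun hcomm x).symm
  have l_closed : ∀ x, l (r (l x)) = l x := l_r_l_eq_l_of_le_iff hgc
  have r_closed : ∀ x, l (r (r x)) = r x := fun x =>
    (r_l_eq (r x)).symm.trans (r_l_r_eq_r_of_le_iff hgc x)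
  refine ⟨fun x _ => l_closed x, fun x _ => r_closed x, fun x hx => ⟨hx, (r_l_eq x).trans hx⟩,
    fun x y z _ _ _ => ?_⟩
  simp only [Function.comp_apply]
  rw [l_r_le_iff_le_of_l_r_eq hgc (r_closed z), l_r_le_iff_le_of_l_r_eq hgc (l_closed y), hshift]

theorem stmt6 {Q : Type*} [CompleteLattice Q]
    (mul : Q → Q → Q)
    (hassoc : ∀ x y z, mul (mul x y) z = mul x (mul y z))
    (ldiv rdiv : Q → Q → Q)
    (hldiv : ∀ x y z : Q, mul x y ≤ z ↔ y ≤ ldiv x z)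
    (hrdiv : ∀ x y z : Q, mul x y ≤ z ↔ x ≤ rdiv z y)
    (l r : Q → Q)
    (hgc : ∀ x y, y ≤ l x ↔ x ≤ r y)
    (hcomm : l ∘ r = r ∘ l)
    (hshift : ∀ x y z, mul x y ≤ r z ↔ mul z x ≤ l y)
    (j : Q → Q) (hj : j = l ∘ r) :
    -- l and r restrict to the j-closed elements:
    (∀ x, j x = x → j (l x) = l x) ∧
    (∀ x, j x = x → j (r x) = r x) ∧
    -- the restrictions are inverse to each other:
    (∀ x, j x = x → l (r x) = x ∧ r (l x) = x) ∧
    -- and they satisfy the Serre shift relation for ∗_j: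
    (∀ x y z, j x = x → j y = y → j z = z →
        (j (mul x y) ≤ r z ↔ j (mul z x) ≤ l y)) :=
  stmt6_general mul l r hgc hcomm hshift j hj
end

section
/- If a quantale (Q, ∗) is unital with unit 1, then every Serre Galois connection (l, r) on Q is representable: setting 0 := r(1) = l(1), we have r(x) = x \ 0 and l(x) = 0 / x for all x. -/
/-! With the unit, the Serre condition at `x = 1` is the Galois connection `y ≤ r x ↔ x ≤ l y`,
and at `z = 1` it reads `z ∗ x ≤ r 1 ↔ z ≤ l x`; combined, `z ≤ r x ↔ x ∗ z ≤ r 1`.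
So `r x` and `l x` have the same lower sets as the residuals `x \ r 1` and `r 1 / x`. -/

section SerreShift

variable {Q : Type*} [PartialOrder Q] {mul : Q → Q → Q} {e : Q} {l r : Q → Q}

theorem le_right_iff_le_left_of_shift (hshift : ∀ x y z, mul x y ≤ r z ↔ mul z x ≤ l y)
    (hel : ∀ x, mul e x = x) (her : ∀ x, mul x e = x) (x y : Q) :
    y ≤ r x ↔ x ≤ l y := by
  simpa only [hel, her] using hshift e y x

theorem right_unit_eq_left_unit_of_shift (hshift : ∀ x y z, mul x y ≤ r z ↔ mul z x ≤ l y)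
    (hel : ∀ x, mul e x = x) (her : ∀ x, mul x e = x) :
    r e = l e :=
  eq_of_forall_le_iff fun x => by simpa only [hel, her] using hshift x e e

theorem le_left_iff_mul_le_right_unit (hshift : ∀ x y z, mul x y ≤ r z ↔ mul z x ≤ l y)
    (hel : ∀ x, mul e x = x) (x z : Q) :
    z ≤ l x ↔ mul z x ≤ r e := by
  simpa only [hel] using (hshift z x e).symm

theorem le_right_iff_mul_le_right_unit (hshift : ∀ x y z, mul x y ≤ r z ↔ mul z x ≤ l y)
    (hel : ∀ x, mul e x = x) (her : ∀ x, mul x e = x) (x z : Q) :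
    z ≤ r x ↔ mul x z ≤ r e := by
  rw [le_right_iff_le_left_of_shift hshift hel her, le_left_iff_mul_le_right_unit hshift hel]

end SerreShift

theorem stmt7_general {Q : Type*} [CompleteLattice Q]
    (mul : Q → Q → Q)
    (ldiv rdiv : Q → Q → Q)
    (hldiv : ∀ x y z : Q, mul x y ≤ z ↔ y ≤ ldiv x z)
    (hrdiv : ∀ x y z : Q, mul x y ≤ z ↔ x ≤ rdiv z y)
    (e : Q) (hel : ∀ x, mul e x = x) (her : ∀ x, mul x e = x)
    (l r : Q → Q)
    (hshift : ∀ x y z, mul x y ≤ r z ↔ mul z x ≤ l y) :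
    r e = l e ∧ (∀ x, r x = ldiv x (r e)) ∧ (∀ x, l x = rdiv (r e) x) := by
  refine ⟨right_unit_eq_left_unit_of_shift hshift hel her,
    fun x => eq_of_forall_le_iff fun z => ?_, fun x => eq_of_forall_le_iff fun z => ?_⟩
  · rw [le_right_iff_mul_le_right_unit hshift hel her, hldiv]
  · rw [le_left_iff_mul_le_right_unit hshift hel, hrdiv]

theorem stmt7 {Q : Type*} [CompleteLattice Q]
    (mul : Q → Q → Q)
    (hassoc : ∀ x y z, mul (mul x y) z = mul x (mul y z))
    (ldiv rdiv : Q → Q → Q)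
    (hldiv : ∀ x y z : Q, mul x y ≤ z ↔ y ≤ ldiv x z)
    (hrdiv : ∀ x y z : Q, mul x y ≤ z ↔ x ≤ rdiv z y)
    (e : Q) (hel : ∀ x, mul e x = x) (her : ∀ x, mul x e = x)
    (l r : Q → Q)
    (hgc : ∀ x y, y ≤ l x ↔ x ≤ r y)
    (hcomm : l ∘ r = r ∘ l)
    (hshift : ∀ x y z, mul x y ≤ r z ↔ mul z x ≤ l y) :
    r e = l e ∧ (∀ x, r x = ldiv x (r e)) ∧ (∀ x, l x = rdiv (r e) x) :=
  stmt7_general mul ldiv rdiv hldiv hrdiv e hel her l r hshift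
end

section
/- Let 0 be a weakly cyclic element of a quantale (Q, ∗), i.e., 0 / (x \ 0) = (0 / x) \ 0 for all x. Set r(x) := x \ 0, l(x) := 0 / x, and j := r ∘ l. If 0 is j-closed (j(0) = 0), then the quotient quantale (Q_j, ∗_j) is unital. Moreover, if Q itself is unital, then 0 is j-closed. -/
/-!
Write `x \ 0` and `0 / x` for `ldiv x z` and `rdiv z x`. Weak cyclicity says that the two
double negations `(0 / x) \ 0` and `0 / (x \ 0)` agree, so a `j`-fixed point `x` is at the same
time of the form `0 / b` and of the form `a \ 0`. Elements of the first form are absorbed by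
`u = 0 / 0` on the left, those of the second form by `v = 0 \ 0` on the right, which gives
`j (u ∗ x) ≤ x` and `j (x ∗ v) ≤ x`. Conversely `u \ 0 = 0` (this is `j 0 = 0`) and dually
`0 / v = 0` give `x ≤ j (u ∗ x)` and `x ≤ j (x ∗ v)`. Hence `u` is a left and `v` a right unit
of `Q_j`, and they coincide. If `Q` has a left unit `e`, then `e ≤ 0 / 0`, whence
`(0 / 0) \ 0 = e ∗ ((0 / 0) \ 0) ≤ 0`.
-/

structure IsResiduated {α : Type*} [LE α] (mul ldiv rdiv : α → α → α) : Prop where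
  mul_le_iff_le_ldiv : ∀ x y z, mul x y ≤ z ↔ y ≤ ldiv x z
  mul_le_iff_le_rdiv : ∀ x y z, mul x y ≤ z ↔ x ≤ rdiv z y

def IsWeaklyCyclic {α : Type*} (ldiv rdiv : α → α → α) (z : α) : Prop :=
  ∀ x, rdiv z (ldiv x z) = ldiv (rdiv z x) z

namespace IsResiduated

variable {α : Type*} [PartialOrder α] {mul ldiv rdiv : α → α → α}
  (hQ : IsResiduated mul ldiv rdiv)
include hQ

theorem mul_ldiv_le (x z : α) : mul x (ldiv x z) ≤ z :=
  (hQ.mul_le_iff_le_ldiv _ _ _).2 le_rfl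

theorem rdiv_mul_le (x z : α) : mul (rdiv z x) x ≤ z :=
  (hQ.mul_le_iff_le_rdiv _ _ _).2 le_rfl

theorem le_ldiv_rdiv (x z : α) : x ≤ ldiv (rdiv z x) z :=
  (hQ.mul_le_iff_le_ldiv _ _ _).1 (hQ.rdiv_mul_le x z)

theorem mul_le_mul_right {a b : α} (c : α) (h : a ≤ b) : mul a c ≤ mul b c :=
  (hQ.mul_le_iff_le_rdiv _ _ _).2 (h.trans ((hQ.mul_le_iff_le_rdiv _ _ _).1 le_rfl))

theorem mul_le_mul_left {a b : α} (c : α) (h : a ≤ b) : mul c a ≤ mul c b :=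
  (hQ.mul_le_iff_le_ldiv _ _ _).2 (h.trans ((hQ.mul_le_iff_le_ldiv _ _ _).1 le_rfl))

theorem ldiv_le_ldiv {a b : α} (z : α) (h : a ≤ b) : ldiv b z ≤ ldiv a z :=
  (hQ.mul_le_iff_le_ldiv _ _ _).1 ((hQ.mul_le_mul_right _ h).trans (hQ.mul_ldiv_le b z))

theorem rdiv_le_rdiv {a b : α} (z : α) (h : a ≤ b) : rdiv z b ≤ rdiv z a :=
  (hQ.mul_le_iff_le_rdiv _ _ _).1 ((hQ.mul_le_mul_left _ h).trans (hQ.rdiv_mul_le b z))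

theorem ldiv_rdiv_le_ldiv_rdiv {a b : α} (z : α) (h : a ≤ b) :
    ldiv (rdiv z a) z ≤ ldiv (rdiv z b) z :=
  hQ.ldiv_le_ldiv z (hQ.rdiv_le_rdiv z h)

section Assoc

variable (hassoc : ∀ x y z, mul (mul x y) z = mul x (mul y z))
include hassoc

theorem rdiv_self_mul_rdiv_le (b z : α) : mul (rdiv z z) (rdiv z b) ≤ rdiv z b := by
  rw [← hQ.mul_le_iff_le_rdiv, hassoc]
  exact (hQ.mul_le_mul_left _ (hQ.rdiv_mul_le b z)).trans (hQ.rdiv_mul_le z z)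

theorem ldiv_mul_ldiv_self_le (a z : α) : mul (ldiv a z) (ldiv z z) ≤ ldiv a z := by
  rw [← hQ.mul_le_iff_le_ldiv, ← hassoc]
  exact (hQ.mul_le_mul_right _ (hQ.mul_ldiv_le a z)).trans (hQ.mul_ldiv_le z z)

theorem le_rdiv_ldiv_mul {u z : α} (hu : ldiv u z = z) (x : α) :
    x ≤ rdiv z (ldiv (mul u x) z) := by
  refine (hQ.mul_le_iff_le_rdiv _ _ _).1 (le_of_le_of_eq ?_ hu)
  rw [← hQ.mul_le_iff_le_ldiv, ← hassoc]
  exact hQ.mul_ldiv_le _ z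

theorem le_ldiv_rdiv_mul {v z : α} (hv : rdiv z v = z) (x : α) :
    x ≤ ldiv (rdiv z (mul x v)) z := by
  refine (hQ.mul_le_iff_le_ldiv _ _ _).1 (le_of_le_of_eq ?_ hv)
  rw [← hQ.mul_le_iff_le_rdiv, hassoc]
  exact hQ.rdiv_mul_le _ z

theorem ldiv_rdiv_rdiv_self_mul {z x : α} (hwc : IsWeaklyCyclic ldiv rdiv z)
    (hz : ldiv (rdiv z z) z = z) (hx : ldiv (rdiv z x) z = x) :
    ldiv (rdiv z (mul (rdiv z z) x)) z = x := by
  have hx' : rdiv z (ldiv x z) = x := (hwc x).trans hx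
  refine le_antisymm ?_ ?_
  · have hle : mul (rdiv z z) x ≤ x := by
      simpa only [hx'] using hQ.rdiv_self_mul_rdiv_le hassoc (ldiv x z) z
    simpa only [hx] using hQ.ldiv_rdiv_le_ldiv_rdiv z hle
  · rw [← hwc]
    exact hQ.le_rdiv_ldiv_mul hassoc hz x

theorem ldiv_rdiv_mul_ldiv_self {z x : α} (hz : rdiv z (ldiv z z) = z)
    (hx : ldiv (rdiv z x) z = x) :
    ldiv (rdiv z (mul x (ldiv z z))) z = x := by
  refine le_antisymm ?_ (hQ.le_ldiv_rdiv_mul hassoc hz x)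
  have hle : mul x (ldiv z z) ≤ x := by
    simpa only [hx] using hQ.ldiv_mul_ldiv_self_le hassoc (rdiv z x) z
  simpa only [hx] using hQ.ldiv_rdiv_le_ldiv_rdiv z hle

theorem exists_unit_of_ldiv_rdiv_self_eq {z : α} (hwc : IsWeaklyCyclic ldiv rdiv z)
    (hz : ldiv (rdiv z z) z = z) :
    ∃ u, ldiv (rdiv z u) z = u ∧ ∀ x, ldiv (rdiv z x) z = x →
      ldiv (rdiv z (mul u x)) z = x ∧ ldiv (rdiv z (mul x u)) z = x := by
  have hz' : rdiv z (ldiv z z) = z := (hwc z).trans hz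
  have hu : ldiv (rdiv z (rdiv z z)) z = rdiv z z := by rw [← hwc, hz]
  have hv : ldiv (rdiv z (ldiv z z)) z = ldiv z z := by rw [hz']
  have left (x) (hx : ldiv (rdiv z x) z = x) := hQ.ldiv_rdiv_rdiv_self_mul hassoc hwc hz hx
  have right (x) (hx : ldiv (rdiv z x) z = x) := hQ.ldiv_rdiv_mul_ldiv_self hassoc hz' hx
  have huv : rdiv z z = ldiv z z := (right _ hu).symm.trans (left _ hv)
  exact ⟨rdiv z z, hu, fun x hx => ⟨left x hx, huv ▸ right x hx⟩⟩

end Assoc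

theorem ldiv_rdiv_self_eq_of_unit {z e : α} (he : ∀ x, mul e x = x) :
    ldiv (rdiv z z) z = z := by
  have he_le : e ≤ rdiv z z := (hQ.mul_le_iff_le_rdiv _ _ _).1 (he z).le
  refine le_antisymm ?_ (hQ.le_ldiv_rdiv z z)
  calc ldiv (rdiv z z) z = mul e (ldiv (rdiv z z) z) := (he _).symm
    _ ≤ mul (rdiv z z) (ldiv (rdiv z z) z) := hQ.mul_le_mul_right _ he_le
    _ ≤ z := hQ.mul_ldiv_le _ z

end IsResiduated

theorem stmt8 {Q : Type*} [CompleteLattice Q]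
    (mul : Q → Q → Q)
    (hassoc : ∀ x y z, mul (mul x y) z = mul x (mul y z))
    (ldiv rdiv : Q → Q → Q)
    (hldiv : ∀ x y z : Q, mul x y ≤ z ↔ y ≤ ldiv x z)
    (hrdiv : ∀ x y z : Q, mul x y ≤ z ↔ x ≤ rdiv z y)
    (z : Q)
    (hwc : ∀ x, rdiv z (ldiv x z) = ldiv (rdiv z x) z)
    (r l : Q → Q) (hr : ∀ x, r x = ldiv x z) (hl : ∀ x, l x = rdiv z x)
    (j : Q → Q) (hj : j = r ∘ l) :
    -- if 0 is j-closed, then (Q_j, ∗_j) is unital: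
    (j z = z →
      ∃ u, j u = u ∧ ∀ x, j x = x → j (mul u x) = x ∧ j (mul x u) = x) ∧
    -- if Q is unital, then 0 is j-closed:
    ((∃ e : Q, ∀ x, mul e x = x ∧ mul x e = x) → j z = z) := by
  have hQ : IsResiduated mul ldiv rdiv := ⟨hldiv, hrdiv⟩
  have hj_apply : ∀ x, j x = ldiv (rdiv z x) z := fun x => by simp [hj, hr, hl]
  simp only [hj_apply]
  exact ⟨hQ.exists_unit_of_ldiv_rdiv_self_eq hassoc hwc,
    fun ⟨_, he⟩ => hQ.ldiv_rdiv_self_eq_of_unit fun x => (he x).1⟩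
end

section
/- Let (S, ·) be a semigroup and (P(S), •) the free quantale on S with X • Y := {x·y : x ∈ X, y ∈ Y}. A Galois connection (l, r) on P(S) corresponding to a binary relation R (via x R y ⟺ y ∈ r({x}) ⟺ x ∈ l({y})) satisfies the shift relation X • Y ⊆ r(Z) ⟺ Z • X ⊆ l(Y) for all subsets X, Y, Z if and only if R is associative, i.e., (x·y) R z ⟺ x R (y·z) for all x, y, z ∈ S. -/
theorem stmt10 {S : Type*} [Semigroup S] (R : S → S → Prop)
    (r l : Set S → Set S)
    (hr : ∀ Z, r Z = {u | ∀ z ∈ Z, R z u})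
    (hl : ∀ Y, l Y = {u | ∀ y ∈ Y, R u y}) :
    (∀ X Y Z : Set S, Set.image2 (· * ·) X Y ⊆ r Z ↔
        Set.image2 (· * ·) Z X ⊆ l Y) ↔
      (∀ x y z : S, R (x * y) z ↔ R x (y * z)) := by
  simp only [hr, hl, Set.image2_subset_iff]
  constructor
  · intro hshift x y z
    simpa using (hshift {y} {z} {x}).symm
  · intro hassoc X Y Z
    exact ⟨fun h z hz x hx y hy => (hassoc z x y).2 (h x hx y hy z hz),
      fun h x hx y hy z hz => (hassoc z x y).1 (h z hz x hx y hy)⟩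
end

section
/- If f : L → L is a meet-preserving map on a complete lattice L with left adjoint λf, then the right adjoint of the Raney transform f^∨ equals the Raney transform (λf)^∧, i.e., for all x, y: f^∨(x) ≤ y ⟺ x ≤ (λf)^∧(y). -/
/-- The Raney transform f^∨. -/
def raneV {L : Type*} [CompleteLattice L] (f : L → L) (x : L) : L :=
  sSup (f '' {t | ¬ x ≤ t})

/-- The Raney transform f^∧. -/
def raneI {L : Type*} [CompleteLattice L] (f : L → L) (x : L) : L :=
  sInf (f '' {t | ¬ t ≤ x})

/-!
Unfolding the supremum and the infimum, `f^∨(x) ≤ y` says that `f t ≤ y` whenever `x ≰ t`,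
and `x ≤ (λf)^∧(y)` says that `x ≤ λf s` whenever `s ≰ y`. Each follows from the other by
contraposition, through the unit `s ≤ f (λf s)` in one direction and the counit
`λf (f t) ≤ t` in the other.
-/

section

variable {L : Type*} [CompleteLattice L]

theorem raneV_le_iff {f : L → L} {x y : L} :
    raneV f x ≤ y ↔ ∀ t, ¬ x ≤ t → f t ≤ y := by
  simp only [raneV, sSup_le_iff, Set.forall_mem_image, Set.mem_ofPred_eq]

theorem le_raneI_iff {g : L → L} {x y : L} :
    x ≤ raneI g y ↔ ∀ s, ¬ s ≤ y → x ≤ g s := by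
  simp only [raneI, le_sInf_iff, Set.forall_mem_image, Set.mem_ofPred_eq]

theorem GaloisConnection.raneV_raneI {f lf : L → L} (gc : GaloisConnection lf f) :
    GaloisConnection (raneV f) (raneI lf) := by
  intro x y
  rw [raneV_le_iff, le_raneI_iff]
  constructor
  · intro h s hsy
    by_contra hx
    exact hsy ((gc.le_u_l s).trans (h (lf s) hx))
  · intro h t hxt
    by_contra hy
    exact hxt ((h (f t) hy).trans (gc.l_u_le t))

end

theorem stmt13_general {L : Type*} [CompleteLattice L] (f lf : L → L)
    (hadj : ∀ x y : L, lf x ≤ y ↔ x ≤ f y) :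
    ∀ x y : L, raneV f x ≤ y ↔ x ≤ raneI lf y :=
  GaloisConnection.raneV_raneI hadj

theorem stmt13 {L : Type*} [CompleteLattice L] (f lf : L → L)
    (hmeet : ∀ s : Set L, f (sInf s) = sInf (f '' s))
    (hadj : ∀ x y : L, lf x ≤ y ↔ x ≤ f y) :
    ∀ x y : L, raneV f x ≤ y ↔ x ≤ raneI lf y :=
  stmt13_general f lf hadj
end

section
/- For a complete lattice L, a map f : L → L is tight (i.e., f = (f^∧)^∨) if and only if f lies in the image of the Raney transform (−)^∨, i.e., f = g^∨ for some g : L → L. Consequently, (f^∧)^∨ is the greatest tight map below f, and the set of tight maps is closed under arbitrary (pointwise) suprema. -/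
/-- A map is tight if f = (f^∧)^∨. -/
def Tight {L : Type*} [CompleteLattice L] (f : L → L) : Prop :=
  raneV (raneI f) = f

namespace GaloisConnection

variable {α β : Type*} {l : α → β} {u : β → α}

theorem le_l_u_of_le [Preorder α] [Preorder β] (gc : GaloisConnection l u) {b c : β}
    (hc : l (u c) = c) (hcb : c ≤ b) : c ≤ l (u b) :=
  calc c = l (u c) := hc.symm
    _ ≤ l (u b) := gc.monotone_l (gc.monotone_u hcb)

theorem l_u_sSup_eq_sSup [CompleteLattice α] [CompleteLattice β] (gc : GaloisConnection l u)
    {S : Set β} (hS : ∀ b ∈ S, l (u b) = b) : l (u (sSup S)) = sSup S := by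
  have h : sSup S = l (⨆ b ∈ S, u b) := by
    rw [gc.l_iSup₂, sSup_eq_iSup]
    exact iSup_congr fun b => iSup_congr fun hb => (hS b hb).symm
  exact ((gc.exists_eq_l _).mp ⟨_, h⟩).symm

end GaloisConnection

section Raney

variable {L : Type*} [CompleteLattice L]

theorem galoisConnection_raneV_raneI : GaloisConnection (raneV (L := L)) raneI := fun g f => by
  simp only [Pi.le_def, raneV, raneI, sSup_le_iff, le_sInf_iff, Set.forall_mem_image,
    Set.mem_ofPred_eq]
  exact forall_comm

theorem tight_iff_exists_eq_raneV {f : L → L} : Tight f ↔ ∃ g, f = raneV g :=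
  ((galoisConnection_raneV_raneI.exists_eq_l f).trans eq_comm).symm

theorem Tight.le_raneV_raneI {f g : L → L} (hg : Tight g) (hgf : g ≤ f) :
    g ≤ raneV (raneI f) :=
  galoisConnection_raneV_raneI.le_l_u_of_le hg hgf

theorem tight_sSup {S : Set (L → L)} (hS : ∀ g ∈ S, Tight g) : Tight (sSup S) :=
  galoisConnection_raneV_raneI.l_u_sSup_eq_sSup hS

end Raney

theorem stmt15 {L : Type*} [CompleteLattice L] :
    -- f is tight iff it lies in the image of (−)^∨:
    (∀ f : L → L, Tight f ↔ ∃ g : L → L, f = raneV g) ∧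
    -- (f^∧)^∨ is the greatest tight map below f:
    (∀ f : L → L, Tight (raneV (raneI f)) ∧ raneV (raneI f) ≤ f ∧
        ∀ g : L → L, Tight g → g ≤ f → g ≤ raneV (raneI f)) ∧
    -- tight maps are closed under arbitrary pointwise suprema:
    (∀ S : Set (L → L), (∀ g ∈ S, Tight g) → Tight (sSup S)) :=
  ⟨fun _ => tight_iff_exists_eq_raneV,
    fun f => ⟨tight_iff_exists_eq_raneV.mpr ⟨_, rfl⟩, galoisConnection_raneV_raneI.l_u_le f,
      fun _ => Tight.le_raneV_raneI⟩,
    fun _ => tight_sSup⟩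
end

section
/- For a complete lattice L, if f : L → L is sup-preserving and g : L → L is any function, then (f ∘ g)^∨ = f ∘ g^∨. Consequently, tight endomaps of L are closed under composition. -/
/-!
Both `raneV f ≤ g` and `f ≤ raneI g` say that `f t ≤ g x` whenever `x ≰ t`, so the two Raney
transforms form a Galois connection on `L → L`; hence the maps `f^∨` are exactly the tight ones.
Each `f^∨` preserves joins because `⋁ s ≰ t` iff `a ≰ t` for some `a ∈ s`. A join-preserving `f` commutes
with the join defining `g^∨`, so `(f ∘ g)^∨ = f ∘ g^∨`; for tight `f` and `g` this makes
`f ∘ g = f ∘ (g^∧)^∨ = (f ∘ g^∧)^∨` tight.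
-/

section Raney

variable {L : Type*} [CompleteLattice L]

theorem gc_raneV_raneI : GaloisConnection (raneV : (L → L) → L → L) raneI := fun f g => by
  simp only [Pi.le_def, raneV, raneI, sSup_le_iff, le_sInf_iff, Set.forall_mem_image,
    Set.mem_ofPred_eq]
  exact forall_comm

theorem tight_raneV (f : L → L) : Tight (raneV f) :=
  gc_raneV_raneI.l_u_l_eq_l f

theorem raneV_sSup (f : L → L) (s : Set L) :
    raneV f (sSup s) = sSup (raneV f '' s) := by
  have hnot : {t | ¬ sSup s ≤ t} = ⋃ a ∈ s, {t | ¬ a ≤ t} := by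
    ext t
    simp [sSup_le_iff]
  simp only [raneV, hnot, Set.image_iUnion₂, sSup_iUnion, sSup_image]

theorem Tight.map_sSup {f : L → L} (hf : Tight f) (s : Set L) :
    f (sSup s) = sSup (f '' s) := by
  rw [← hf, raneV_sSup]

theorem raneV_comp {f : L → L} (hf : ∀ s : Set L, f (sSup s) = sSup (f '' s)) (g : L → L) :
    raneV (f ∘ g) = f ∘ raneV g := by
  funext x
  rw [Function.comp_apply, raneV, raneV, Set.image_comp, hf]

theorem Tight.comp {f g : L → L} (hf : Tight f) (hg : Tight g) : Tight (f ∘ g) := by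
  rw [← hg, ← raneV_comp hf.map_sSup]
  exact tight_raneV _

end Raney

theorem stmt16 {L : Type*} [CompleteLattice L] :
    -- if f is sup-preserving then (f ∘ g)^∨ = f ∘ g^∨:
    (∀ f g : L → L, (∀ s : Set L, f (sSup s) = sSup (f '' s)) →
        raneV (f ∘ g) = f ∘ raneV g) ∧
    -- consequently tight maps are closed under composition:
    (∀ f g : L → L, Tight f → Tight g → Tight (f ∘ g)) :=
  ⟨fun _ g hf => raneV_comp hf g, fun _ _ hf hg => hf.comp hg⟩
end

section
/- Every tight endomap of a complete lattice L is the supremum of maps of the form c_y ∘ a_x, where c_y(t) = y for t ≠ ⊥ and c_y(⊥) = ⊥, and a_x(t) = ⊤ for t ≰ x and a_x(t) = ⊥ for t ≤ x. Specifically, for any g : L → L, g^∨ = ⋁{c_{g(t)} ∘ a_t : t ∈ L}. -/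
open Classical in
/-- The map c_y : t ↦ y for t ≠ ⊥, ⊥ ↦ ⊥. -/
noncomputable def cMap {L : Type*} [CompleteLattice L] (y t : L) : L :=
  if t = ⊥ then ⊥ else y

open Classical in
/-- The map a_x : t ↦ ⊤ for t ≰ x, t ↦ ⊥ for t ≤ x. -/
noncomputable def aMap {L : Type*} [CompleteLattice L] (x t : L) : L :=
  if t ≤ x then ⊥ else ⊤

open Classical in
lemma cMap_comp_aMap_apply {L : Type*} [CompleteLattice L] (y t x : L) :
    (cMap y ∘ aMap t) x = if x ≤ t then ⊥ else y := by
  by_cases hxt : x ≤ t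
  · simp [cMap, aMap, hxt]
  · have hne : (⊤ : L) ≠ ⊥ := fun h => hxt (le_top.trans (h.trans_le bot_le))
    simp [cMap, aMap, hxt, hne]

theorem raneV_eq_iSup_cMap_comp_aMap {L : Type*} [CompleteLattice L] (g : L → L) :
    raneV g = ⨆ t : L, cMap (g t) ∘ aMap t := by
  classical
  funext x
  simp only [raneV, sSup_image, Set.mem_ofPred_eq, iSup_apply, cMap_comp_aMap_apply, iSup_eq_if,
    ite_not]

theorem stmt17 {L : Type*} [CompleteLattice L] :
    -- g^∨ = ⋁_{t ∈ L} c_{g(t)} ∘ a_t: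
    (∀ g : L → L, raneV g = ⨆ t : L, (cMap (g t)) ∘ (aMap t)) ∧
    -- hence every tight map is a supremum of maps of the form c_y ∘ a_x:
    (∀ f : L → L, Tight f →
        ∃ h : L → L, f = ⨆ t : L, (cMap (h t)) ∘ (aMap t)) :=
  ⟨raneV_eq_iSup_cMap_comp_aMap,
    fun f hf => ⟨raneI f, hf.symm.trans (raneV_eq_iSup_cMap_comp_aMap _)⟩⟩
end

section
/- If a Frobenius quantale Q admits a strongly continuous quantale embedding (a quantale embedding preserving arbitrary infima and both residuals) into a unital quantale, then Q itself is unital; specifically, the element u := ⋀{x \ x : x ∈ Q} is a two-sided unit of Q. -/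
/-!
Let `u = ⋀ {y \ y}`. Residuation gives `x * u ≤ x` at once, and `u * x ≤ x` because the
Frobenius negations make every `x / x` of the form `y \ y` (namely `x / x = ⊥x \ ⊥x`), so `u`
is also below all `x / x`. Conversely the unit `e` of the target lies below every `ι y \ ι y`,
hence below `ι u` since `ι` preserves infima; then `ι x = e * ι x ≤ ι (u * x)`, and `ι` reflects
the order, being injective and meet-preserving.
-/

theorem rdiv_self_eq_ldiv_self_lneg {α : Type*} (ldiv rdiv : α → α → α) (lneg rneg : α → α)
    (hinv2 : ∀ x, rneg (lneg x) = x) (hserre : ∀ x y, ldiv x (lneg y) = rdiv (rneg x) y)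
    (y : α) : rdiv y y = ldiv (lneg y) (lneg y) := by
  rw [hserre, hinv2]

theorem le_of_map_le_of_map_inf {α β : Type*} [SemilatticeInf α] [SemilatticeInf β]
    {ι : α → β} (hinj : Function.Injective ι) (hinf : ∀ a b, ι (a ⊓ b) = ι a ⊓ ι b)
    {a b : α} (h : ι a ≤ ι b) : a ≤ b :=
  inf_eq_left.mp (hinj ((hinf a b).trans (inf_eq_left.mpr h)))

theorem le_ldiv_self_of_mul_one {α : Type*} [Preorder α] (mul ldiv : α → α → α)
    (hldiv : ∀ x y z : α, mul x y ≤ z ↔ y ≤ ldiv x z) {e : α} (her : ∀ x, mul x e = x)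
    (y : α) : e ≤ ldiv y y :=
  (hldiv y e y).mp (her y).le

theorem one_le_map_sInf_ldiv_self {Q Q' : Type*} [CompleteLattice Q] [CompleteLattice Q']
    (ldiv : Q → Q → Q)
    (mul' : Q' → Q' → Q') (ldiv' : Q' → Q' → Q')
    (hldiv' : ∀ x y z : Q', mul' x y ≤ z ↔ y ≤ ldiv' x z)
    {e : Q'} (her : ∀ x, mul' x e = x) {ι : Q → Q'}
    (hinf : ∀ s : Set Q, ι (sInf s) = sInf (ι '' s))
    (hld : ∀ x y, ι (ldiv x y) = ldiv' (ι x) (ι y)) :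
    e ≤ ι (sInf {z | ∃ y, z = ldiv y y}) := by
  rw [hinf]
  refine le_sInf ?_
  rintro _ ⟨_, ⟨y, rfl⟩, rfl⟩
  rw [hld]
  exact le_ldiv_self_of_mul_one mul' ldiv' hldiv' her (ι y)

theorem stmt19_general {Q Q' : Type*} [CompleteLattice Q] [CompleteLattice Q']
    -- Q is a Frobenius quantale:
    (mul : Q → Q → Q)
    (ldiv rdiv : Q → Q → Q)
    (hldiv : ∀ x y z : Q, mul x y ≤ z ↔ y ≤ ldiv x z)
    (hrdiv : ∀ x y z : Q, mul x y ≤ z ↔ x ≤ rdiv z y)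
    (lneg rneg : Q → Q)
    (hinv2 : ∀ x, rneg (lneg x) = x)
    (hserre : ∀ x y, ldiv x (lneg y) = rdiv (rneg x) y)
    -- Q' is a unital quantale:
    (mul' : Q' → Q' → Q')
    (ldiv' rdiv' : Q' → Q' → Q')
    (hldiv' : ∀ x y z : Q', mul' x y ≤ z ↔ y ≤ ldiv' x z)
    (hrdiv' : ∀ x y z : Q', mul' x y ≤ z ↔ x ≤ rdiv' z y)
    (e : Q') (hel : ∀ x, mul' e x = x) (her : ∀ x, mul' x e = x)
    -- ι is a strongly continuous quantale embedding:
    (ι : Q → Q')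
    (hinj : Function.Injective ι)
    (hmul : ∀ x y, ι (mul x y) = mul' (ι x) (ι y))
    (hinf : ∀ s : Set Q, ι (sInf s) = sInf (ι '' s))
    (hld : ∀ x y, ι (ldiv x y) = ldiv' (ι x) (ι y)) :
    -- then u := ⋀ {x \ x} is a two-sided unit of Q:
    ∀ x : Q, mul (sInf {z | ∃ y, z = ldiv y y}) x = x ∧
      mul x (sInf {z | ∃ y, z = ldiv y y}) = x := by
  set u : Q := sInf {z | ∃ y, z = ldiv y y}
  have heu : e ≤ ι u := one_le_map_sInf_ldiv_self ldiv mul' ldiv' hldiv' her hinf hld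
  have hinf₂ : ∀ a b, ι (a ⊓ b) = ι a ⊓ ι b := fun a b => by
    rw [← sInf_pair, hinf, Set.image_pair, sInf_pair]
  intro x
  have hu_ldiv : u ≤ ldiv x x := sInf_le ⟨x, rfl⟩
  have hu_rdiv : u ≤ rdiv x x :=
    sInf_le ⟨lneg x, rdiv_self_eq_ldiv_self_lneg ldiv rdiv lneg rneg hinv2 hserre x⟩
  refine ⟨le_antisymm ((hrdiv u x x).mpr hu_rdiv) ?_,
    le_antisymm ((hldiv x u x).mpr hu_ldiv) ?_⟩
  · refine le_of_map_le_of_map_inf hinj hinf₂ ?_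
    calc ι x = mul' e (ι x) := (hel (ι x)).symm
      _ ≤ mul' (ι u) (ι x) := GaloisConnection.monotone_l
        (l := fun a => mul' a (ι x)) (fun a b => hrdiv' a (ι x) b) heu
      _ = ι (mul u x) := (hmul u x).symm
  · refine le_of_map_le_of_map_inf hinj hinf₂ ?_
    calc ι x = mul' (ι x) e := (her (ι x)).symm
      _ ≤ mul' (ι x) (ι u) := GaloisConnection.monotone_l (hldiv' (ι x)) heu
      _ = ι (mul x u) := (hmul x u).symm

theorem stmt19 {Q Q' : Type*} [CompleteLattice Q] [CompleteLattice Q']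
    -- Q is a Frobenius quantale:
    (mul : Q → Q → Q)
    (hassoc : ∀ x y z, mul (mul x y) z = mul x (mul y z))
    (ldiv rdiv : Q → Q → Q)
    (hldiv : ∀ x y z : Q, mul x y ≤ z ↔ y ≤ ldiv x z)
    (hrdiv : ∀ x y z : Q, mul x y ≤ z ↔ x ≤ rdiv z y)
    (lneg rneg : Q → Q)
    (hlanti : Antitone lneg) (hranti : Antitone rneg)
    (hinv1 : ∀ x, lneg (rneg x) = x) (hinv2 : ∀ x, rneg (lneg x) = x)
    (hserre : ∀ x y, ldiv x (lneg y) = rdiv (rneg x) y)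
    -- Q' is a unital quantale:
    (mul' : Q' → Q' → Q')
    (hassoc' : ∀ x y z, mul' (mul' x y) z = mul' x (mul' y z))
    (ldiv' rdiv' : Q' → Q' → Q')
    (hldiv' : ∀ x y z : Q', mul' x y ≤ z ↔ y ≤ ldiv' x z)
    (hrdiv' : ∀ x y z : Q', mul' x y ≤ z ↔ x ≤ rdiv' z y)
    (e : Q') (hel : ∀ x, mul' e x = x) (her : ∀ x, mul' x e = x)
    -- ι is a strongly continuous quantale embedding:
    (ι : Q → Q')
    (hinj : Function.Injective ι)
    (hsup : ∀ s : Set Q, ι (sSup s) = sSup (ι '' s))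
    (hmul : ∀ x y, ι (mul x y) = mul' (ι x) (ι y))
    (hinf : ∀ s : Set Q, ι (sInf s) = sInf (ι '' s))
    (hld : ∀ x y, ι (ldiv x y) = ldiv' (ι x) (ι y))
    (hrd : ∀ x y, ι (rdiv x y) = rdiv' (ι x) (ι y)) :
    -- then u := ⋀ {x \ x} is a two-sided unit of Q:
    ∀ x : Q, mul (sInf {z | ∃ y, z = ldiv y y}) x = x ∧
      mul x (sInf {z | ∃ y, z = ldiv y y}) = x :=
  stmt19_general mul ldiv rdiv hldiv hrdiv lneg rneg hinv2 hserre mul' ldiv' rdiv' hldiv' hrdiv' e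
    hel her ι hinj hmul hinf hld
end
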